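/- Let ξ₁, …, ξ_n be independent, square-integrable, symmetric real random variables. For each m ≤ n let R_m = Σ over the m consecutive blocks of a fixed nested refinement sequence of (block sum)², i.e. R_m is the realized variance over the m-th partition in a nested sequence of partitions of {1,…,n} (with R_n = Σ_k ξ_k²). Then (R_m)_{m = n, n−1, …} is a reverse martingale with respect to G_m = σ(R_m, R_{m+1}, …, R_n): E[R_{m−1} | G_m] = R_m a.s. for each m. -/

import Mathlib

open MeasureTheory ProbabilityTheory Finset

/-!
Expanding the squares, `R l = ∑_{k, k'} 1[k ∼ₗ k'] ξ k ξ k'`, where `k ∼ₗ k'` says that `k` and `k'`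
lie in the same block of the `l`-th partition. Since the `m`-th partition refines the `(m-1)`-th,
`R (m-1) - R m` is a sum of products `ξ k ξ k'` with `k ≁ₘ k'`. Flipping the signs of the `ξ i`
over the `m`-th block containing `k` preserves the joint law (independence and symmetry), fixes
every `R l` with `l ≥ m` (their partitions refine the `m`-th one) and negates `ξ k ξ k'`. Hence
`∫_A ξ k ξ k' = 0` for every `A ∈ G m`, so `R (m-1)` and `R m` have the same integral over `A`.
-/

theorem MeasureTheory.MeasurePreserving.setIntegral_eq_zero_of_comp_eq_neg {X E : Type*}
    [MeasurableSpace X] [NormedAddCommGroup E] [NormedSpace ℝ E] {ν : Measure X} {F : X → X}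
    (hF : MeasurePreserving F ν ν) {g : X → E} (hg : AEStronglyMeasurable g ν)
    (hgF : ∀ x, g (F x) = -g x) {s : Set X} (hs : MeasurableSet s) (hFs : F ⁻¹' s = s) :
    ∫ x in s, g x ∂ν = 0 := by
  have : IsAddTorsionFree E := .of_isTorsionFree ℝ E
  have hinv : ∫ x in s, g x ∂ν = ∫ x in s, g (F x) ∂ν := by
    conv_lhs => rw [← hF.map_eq]
    rw [setIntegral_map hs (by rwa [hF.map_eq]) hF.measurable.aemeasurable, hFs]
  simpa only [hgF, integral_neg, self_eq_neg] using hinv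

theorem Finset.sum_range_sum_Ico {M : Type*} [AddCommMonoid M] {q : ℕ → ℕ} (hq : Monotone q)
    (f : ℕ → M) (l : ℕ) :
    ∑ j ∈ range l, ∑ k ∈ Ico (q j) (q (j + 1)), f k = ∑ k ∈ Ico (q 0) (q l), f k := by
  induction l with
  | zero => simp
  | succ l ih => rw [sum_range_succ, ih, sum_Ico_consecutive f (hq l.zero_le) (hq l.le_succ)]

namespace NestedRealizedVariance

def negOn {ι : Type*} (T : Set ι) [DecidablePred (· ∈ T)] (x : ι → ℝ) (i : ι) : ℝ :=
  if i ∈ T then -x i else x i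

theorem measurable_negOn {ι : Type*} (T : Set ι) [DecidablePred (· ∈ T)] :
    Measurable (negOn T) := by
  refine measurable_pi_iff.2 fun i => ?_
  unfold negOn
  split_ifs
  · exact (measurable_pi_apply i).neg
  · exact measurable_pi_apply i

theorem measurePreserving_negOn {ι Ω : Type*} {m0 : MeasurableSpace Ω} {μ : Measure Ω}
    [IsProbabilityMeasure μ] {ξ : ι → Ω → ℝ} (hm : ∀ i, Measurable (ξ i))
    (hindep : iIndepFun ξ μ) (hsymm : ∀ i, μ.map (ξ i) = μ.map (fun ω => -ξ i ω))
    (T : Set ι) [DecidablePred (· ∈ T)] :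
    MeasurePreserving (negOn T) (μ.map fun ω i => ξ i ω) (μ.map fun ω i => ξ i ω) := by
  refine ⟨measurable_negOn T, ?_⟩
  have hflip : ∀ i, (μ.map (ξ i)).map (fun y => if i ∈ T then -y else y) = μ.map (ξ i) := by
    intro i
    split_ifs
    · rw [Measure.map_map measurable_neg (hm i), hsymm i]
      rfl
    · exact Measure.map_id
  have := fun i => Measure.isProbabilityMeasure_map (μ := μ) (hm i).aemeasurable
  have hprod := Measure.infinitePi_map_pi (μ := fun i => μ.map (ξ i))
    (f := fun i y => if i ∈ T then -y else y) (fun i => by split_ifs <;> fun_prop)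
  simp only [hflip] at hprod
  rw [hindep.map_fun_eq_infinitePi_map hm]
  exact hprod

theorem setIntegral_mul_eq_zero_of_negOn_preimage_eq {ι Ω : Type*} {m0 : MeasurableSpace Ω}
    {μ : Measure Ω} [IsProbabilityMeasure μ] {ξ : ι → Ω → ℝ} (hm : ∀ i, Measurable (ξ i))
    (hindep : iIndepFun ξ μ) (hsymm : ∀ i, μ.map (ξ i) = μ.map (fun ω => -ξ i ω))
    {T : Set ι} [DecidablePred (· ∈ T)] {i i' : ι} (hi : i ∈ T) (hi' : i' ∉ T)
    {s : Set (ι → ℝ)} (hs : MeasurableSet s) (hTs : negOn T ⁻¹' s = s) :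
    ∫ ω in (fun ω i => ξ i ω) ⁻¹' s, ξ i ω * ξ i' ω ∂μ = 0 := by
  rw [← setIntegral_map (f := fun x => x i * x i') hs (by fun_prop)
    (measurable_pi_iff.2 hm).aemeasurable]
  exact (measurePreserving_negOn hm hindep hsymm T).setIntegral_eq_zero_of_comp_eq_neg
    (by fun_prop) (fun x => by simp [negOn, hi, hi']) hs hTs

def SameBlock (q : ℕ → ℕ) (l k k' : ℕ) : Prop := ∀ j ≤ l, (q j ≤ k ↔ q j ≤ k')

instance (q : ℕ → ℕ) (l : ℕ) : DecidableRel (SameBlock q l) :=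
  fun _ _ => inferInstanceAs (Decidable (∀ j ≤ l, _))

namespace SameBlock

variable {q : ℕ → ℕ} {l k k' k'' : ℕ}

theorem refl : SameBlock q l k k := fun _ _ => Iff.rfl

theorem symm (h : SameBlock q l k k') : SameBlock q l k' k := fun j hj => (h j hj).symm

theorem trans (h : SameBlock q l k k') (h' : SameBlock q l k' k'') : SameBlock q l k k'' :=
  fun j hj => (h j hj).trans (h' j hj)

theorem of_refines {q' : ℕ → ℕ} {l' : ℕ} (hq : ∀ j ≤ l, ∃ j' ≤ l', q' j' = q j)
    (h : SameBlock q' l' k k') : SameBlock q l k k' := by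
  intro j hj
  obtain ⟨j', hj', hq'⟩ := hq j hj
  exact hq' ▸ h j' hj'

end SameBlock

theorem sameBlock_iff_mem_Ico {q : ℕ → ℕ} (hq : Monotone q) {l j k k' : ℕ} (hj : j < l)
    (hk : k ∈ Ico (q j) (q (j + 1))) : SameBlock q l k k' ↔ k' ∈ Ico (q j) (q (j + 1)) := by
  rw [mem_Ico] at hk ⊢
  constructor
  · intro h
    exact ⟨(h j hj.le).1 hk.1, not_le.1 fun h' => not_le.2 hk.2 ((h (j + 1) hj).2 h')⟩
  · intro h i hi
    rcases le_or_gt i j with hij | hij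
    · exact iff_of_true ((hq hij).trans hk.1) ((hq hij).trans h.1)
    · exact iff_of_false (not_le.2 (hk.2.trans_le (hq hij))) (not_le.2 (h.2.trans_le (hq hij)))

def realizedVariance (q : ℕ → ℕ) (l : ℕ) (x : ℕ → ℝ) : ℝ :=
  ∑ j ∈ range l, (∑ k ∈ Ico (q j) (q (j + 1)), x k) ^ 2

theorem measurable_realizedVariance (q : ℕ → ℕ) (l : ℕ) : Measurable (realizedVariance q l) := by
  unfold realizedVariance
  fun_prop

theorem realizedVariance_eq_sum_sameBlock {q : ℕ → ℕ} (hq : Monotone q) {l n : ℕ}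
    (hq0 : q 0 = 0) (hql : q l = n) (x : ℕ → ℝ) :
    realizedVariance q l x =
      ∑ k ∈ range n, ∑ k' ∈ range n, if SameBlock q l k k' then x k * x k' else 0 := by
  calc realizedVariance q l x
      = ∑ j ∈ range l, ∑ k ∈ Ico (q j) (q (j + 1)),
          ∑ k' ∈ range n, if SameBlock q l k k' then x k * x k' else 0 := by
        refine sum_congr rfl fun j hj => ?_
        have hjn : q (j + 1) ≤ n := hql ▸ hq (mem_range.1 hj)
        rw [sq, sum_mul]
        refine sum_congr rfl fun k hk => ?_
        have hblock : (range n).filter (SameBlock q l k) = Ico (q j) (q (j + 1)) := by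
          ext k'
          rw [mem_filter, mem_range, sameBlock_iff_mem_Ico hq (mem_range.1 hj) hk]
          exact ⟨And.right, fun h => ⟨(mem_Ico.1 h).2.trans_le hjn, h⟩⟩
        rw [← sum_filter, hblock, mul_sum]
    _ = ∑ k ∈ range n, ∑ k' ∈ range n, if SameBlock q l k k' then x k * x k' else 0 := by
        rw [sum_range_sum_Ico hq, hq0, hql, range_eq_Ico]

theorem realizedVariance_negOn {q : ℕ → ℕ} (hq : Monotone q) {l n : ℕ} (hq0 : q 0 = 0)
    (hql : q l = n) {T : Set ℕ} [DecidablePred (· ∈ T)]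
    (hT : ∀ k k', SameBlock q l k k' → (k ∈ T ↔ k' ∈ T)) (x : ℕ → ℝ) :
    realizedVariance q l (negOn T x) = realizedVariance q l x := by
  simp only [realizedVariance_eq_sum_sameBlock hq hq0 hql]
  refine sum_congr rfl fun k _ => sum_congr rfl fun k' _ => ?_
  split_ifs with h
  · have := hT k k' h
    unfold negOn
    split_ifs <;> simp_all
  · rfl

theorem integrable_realizedVariance {Ω : Type*} {m0 : MeasurableSpace Ω} {μ : Measure Ω}
    {X : ℕ → Ω → ℝ} (hX : ∀ k, MemLp (X k) 2 μ) (q : ℕ → ℕ) (l : ℕ) :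
    Integrable (fun ω => realizedVariance q l fun k => X k ω) μ :=
  integrable_finsetSum _ fun _ _ => (memLp_finsetSum _ fun k _ => hX k).integrable_sq

theorem setIntegral_realizedVariance {Ω : Type*} {m0 : MeasurableSpace Ω} {μ : Measure Ω}
    {X : ℕ → Ω → ℝ} (hX : ∀ k, MemLp (X k) 2 μ) {q : ℕ → ℕ} (hq : Monotone q) {l n : ℕ}
    (hq0 : q 0 = 0) (hql : q l = n) (s : Set Ω) :
    ∫ ω in s, realizedVariance q l (fun k => X k ω) ∂μ =
      ∑ k ∈ range n, ∑ k' ∈ range n,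
        if SameBlock q l k k' then ∫ ω in s, X k ω * X k' ω ∂μ else 0 := by
  have hpair : ∀ k k', Integrable (fun ω => if SameBlock q l k k' then X k ω * X k' ω else 0)
      (μ.restrict s) := fun k k' => by
    split_ifs
    · exact ((hX k).integrable_mul (hX k')).restrict
    · exact integrable_zero _ _ _
  simp only [realizedVariance_eq_sum_sameBlock hq hq0 hql]
  rw [integral_finsetSum _ fun k _ => integrable_finsetSum _ fun k' _ => hpair k k']
  refine sum_congr rfl fun k _ => ?_
  rw [integral_finsetSum _ fun k' _ => hpair k k']
  refine sum_congr rfl fun k' _ => ?_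
  split_ifs <;> simp

structure IsNestedPartitions (p : ℕ → ℕ → ℕ) (n : ℕ) : Prop where
  zero : ∀ m, p m 0 = 0
  last : ∀ m, p m m = n
  mono : ∀ m, Monotone (p m)
  nested : ∀ m j, j ≤ m → ∃ j', j' ≤ m + 1 ∧ p (m + 1) j' = p m j

theorem exists_eq_of_nested {p : ℕ → ℕ → ℕ}
    (hnested : ∀ m j, j ≤ m → ∃ j', j' ≤ m + 1 ∧ p (m + 1) j' = p m j) {m l : ℕ} (hml : m ≤ l)
    {j : ℕ} (hj : j ≤ m) : ∃ j' ≤ l, p l j' = p m j := by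
  induction l, hml using Nat.le_induction with
  | base => exact ⟨j, hj, rfl⟩
  | succ l _ ih =>
    obtain ⟨j', hj', he⟩ := ih
    obtain ⟨j'', hj'', he'⟩ := hnested l j' hj'
    exact ⟨j'', hj'', he'.trans he⟩

abbrev finerRealizedVariances (p : ℕ → ℕ → ℕ) (m n : ℕ) : MeasurableSpace (ℕ → ℝ) :=
  ⨆ (l : ℕ) (_ : m ≤ l ∧ l ≤ n), MeasurableSpace.comap (realizedVariance (p l) l) inferInstance

theorem finerRealizedVariances_le_invariants_negOn {p : ℕ → ℕ → ℕ} {n : ℕ}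
    (hp : IsNestedPartitions p n) (m k : ℕ) :
    finerRealizedVariances p m n ≤
      MeasurableSpace.invariants (negOn {i | SameBlock (p m) m k i}) := by
  refine iSup₂_le fun l hl => measurable_iff_comap_le.1 ?_
  refine MeasurableSpace.measurable_invariants_dom.2
    ⟨measurable_realizedVariance _ _, fun t _ => ?_⟩
  have hT : ∀ a b, SameBlock (p l) l a b →
      (a ∈ {i | SameBlock (p m) m k i} ↔ b ∈ {i | SameBlock (p m) m k i}) := fun a b hab =>
    have hab' := hab.of_refines fun j hj => exists_eq_of_nested hp.nested hl.1 hj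
    ⟨fun ha => ha.trans hab', fun hb => hb.trans hab'.symm⟩
  rw [Function.comp_def, funext (realizedVariance_negOn (hp.mono l) (hp.zero l) (hp.last l) hT)]

theorem setIntegral_realizedVariance_pred_eq {Ω : Type*} {m0 : MeasurableSpace Ω}
    {μ : Measure Ω} [IsProbabilityMeasure μ] {ξ : ℕ → Ω → ℝ} (hm : ∀ k, Measurable (ξ k))
    (hindep : iIndepFun ξ μ) (hL2 : ∀ k, MemLp (ξ k) 2 μ)
    (hsymm : ∀ k, μ.map (ξ k) = μ.map (fun ω => -ξ k ω)) {p : ℕ → ℕ → ℕ} {n : ℕ}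
    (hp : IsNestedPartitions p n) {m : ℕ} {s : Set (ℕ → ℝ)}
    (hs : MeasurableSet[finerRealizedVariances p m n] s) :
    ∫ ω in (fun ω k => ξ k ω) ⁻¹' s, realizedVariance (p (m - 1)) (m - 1) (fun k => ξ k ω) ∂μ =
      ∫ ω in (fun ω k => ξ k ω) ⁻¹' s, realizedVariance (p m) m (fun k => ξ k ω) ∂μ := by
  rw [setIntegral_realizedVariance hL2 (hp.mono m) (hp.zero m) (hp.last m),
    setIntegral_realizedVariance hL2 (hp.mono (m - 1)) (hp.zero (m - 1)) (hp.last (m - 1))]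
  refine sum_congr rfl fun k _ => sum_congr rfl fun k' _ => ?_
  by_cases h : SameBlock (p m) m k k'
  · have hcoarse : SameBlock (p (m - 1)) (m - 1) k k' :=
      h.of_refines fun j hj => exists_eq_of_nested hp.nested (Nat.sub_le m 1) hj
    rw [if_pos h, if_pos hcoarse]
  · obtain ⟨hs', hinv⟩ := finerRealizedVariances_le_invariants_negOn hp m k s hs
    simp [setIntegral_mul_eq_zero_of_negOn_preimage_eq hm hindep hsymm SameBlock.refl h hs' hinv]

end NestedRealizedVariance

open NestedRealizedVariance

theorem nested_rv_reverse_martingale_general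
    {Ω : Type*} {m0 : MeasurableSpace Ω} {μ : Measure Ω} [IsProbabilityMeasure μ]
    (n : ℕ) (ξ : ℕ → Ω → ℝ) (hm : ∀ k, Measurable (ξ k))
    (hindep : iIndepFun ξ μ)
    (hsq : ∀ k, Integrable (fun ω => ξ k ω ^ 2) μ)
    (hsymm : ∀ k, Measure.map (ξ k) μ = Measure.map (fun ω => -ξ k ω) μ)
    (p : ℕ → ℕ → ℕ)
    (hp0 : ∀ m, p m 0 = 0) (hpm : ∀ m, p m m = n)
    (hmono : ∀ m, Monotone (p m))
    (hnested : ∀ m j, j ≤ m → ∃ j', j' ≤ m + 1 ∧ p (m + 1) j' = p m j)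
    (R : ℕ → Ω → ℝ)
    (hR : ∀ m ω, R m ω = ∑ j ∈ range m, (∑ k ∈ Ico (p m j) (p m (j + 1)), ξ k ω) ^ 2)
    (G : ℕ → MeasurableSpace Ω)
    (hG : ∀ m, G m = ⨆ (l : ℕ) (_ : m ≤ l ∧ l ≤ n),
      MeasurableSpace.comap (R l) inferInstance) :
    ∀ m, 2 ≤ m → m ≤ n → μ[R (m - 1) | G m] =ᵐ[μ] R m := by
  intro m _ hmn
  have hRξ : ∀ l, R l = fun ω => realizedVariance (p l) l fun k => ξ k ω := fun l => funext (hR l)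
  have hL2 : ∀ k, MemLp (ξ k) 2 μ := fun k =>
    (memLp_two_iff_integrable_sq (hm k).aestronglyMeasurable).2 (hsq k)
  have hRint : ∀ l, Integrable (R l) μ := fun l => hRξ l ▸ integrable_realizedVariance hL2 _ _
  have hRmeas : ∀ l, Measurable (R l) := fun l => by
    rw [hRξ l]
    exact (measurable_realizedVariance _ _).comp (measurable_pi_iff.2 hm)
  have hGle : G m ≤ m0 := hG m ▸ iSup₂_le fun l _ => (hRmeas l).comap_le
  have hRm : StronglyMeasurable[G m] (R m) :=
    (measurable_iff_comap_le.2 (hG m ▸ le_iSup₂ (f := fun l (_ : m ≤ l ∧ l ≤ n) =>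
      MeasurableSpace.comap (R l) inferInstance) m ⟨le_rfl, hmn⟩)).stronglyMeasurable
  have hGξ : G m = (finerRealizedVariances p m n).comap fun ω k => ξ k ω := by
    simp only [hG, finerRealizedVariances, MeasurableSpace.comap_iSup,
      MeasurableSpace.comap_comp, hRξ]
    rfl
  refine (ae_eq_condExp_of_forall_setIntegral_eq hGle (hRint _)
    (fun _ _ _ => (hRint m).integrableOn) ?_ hRm.aestronglyMeasurable).symm
  rintro _ hA -
  obtain ⟨s, hs, rfl⟩ := hGξ ▸ hA
  rw [hRξ, hRξ]
  exact (setIntegral_realizedVariance_pred_eq hm hindep hL2 hsymm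
    ⟨hp0, hpm, hmono, hnested⟩ hs).symm

/-- Discrete reverse martingale of nested realized variances (Lévy / Cogburn–Tucker):
for independent, square-integrable, symmetric `ξ₁,…,ξ_n` and a nested sequence of
partitions of `{1,…,n}` into consecutive blocks (the `m`-th partition having division
points `p m 0 = 0 ≤ p m 1 ≤ … ≤ p m m = n`, each finer partition containing the division
points of the coarser one, the finest being the full partition), the realized variances
`R m ω = Σ_j (Σ_{k ∈ [p m j, p m (j+1))} ξ_k ω)²` form a reverse martingale:
`E[R_{m-1} | σ(R_m, …, R_n)] = R_m`. -/
theorem nested_rv_reverse_martingale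
    {Ω : Type*} {m0 : MeasurableSpace Ω} {μ : Measure Ω} [IsProbabilityMeasure μ]
    (n : ℕ) (ξ : ℕ → Ω → ℝ) (hm : ∀ k, Measurable (ξ k))
    (hindep : iIndepFun ξ μ)
    (hsq : ∀ k, Integrable (fun ω => ξ k ω ^ 2) μ)
    (hsymm : ∀ k, Measure.map (ξ k) μ = Measure.map (fun ω => -ξ k ω) μ)
    (p : ℕ → ℕ → ℕ)
    (hp0 : ∀ m, p m 0 = 0) (hpm : ∀ m, p m m = n)
    (hmono : ∀ m, Monotone (p m))
    (hnested : ∀ m j, j ≤ m → ∃ j', j' ≤ m + 1 ∧ p (m + 1) j' = p m j)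
    (hfinest : ∀ k, k ≤ n → p n k = k)
    (R : ℕ → Ω → ℝ)
    (hR : ∀ m ω, R m ω = ∑ j ∈ range m, (∑ k ∈ Ico (p m j) (p m (j + 1)), ξ k ω) ^ 2)
    (G : ℕ → MeasurableSpace Ω)
    (hG : ∀ m, G m = ⨆ (l : ℕ) (_ : m ≤ l ∧ l ≤ n),
      MeasurableSpace.comap (R l) inferInstance) :
    ∀ m, 2 ≤ m → m ≤ n → μ[R (m - 1) | G m] =ᵐ[μ] R m :=
  nested_rv_reverse_martingale_general (m0 := m0) n ξ hm hindep hsq hsymm p hp0 hpm hmono hnested R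
    hR G hG
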